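/- Let A, B ∈ L(H,K) with A, B having closed range. Then A ≤◇ B in the diamond order if and only if A† ≤⁻ B† in the minus order, where † denotes the (bounded) Moore-Penrose inverse. -/

import Mathlib

open ContinuousLinearMap

/-- The orthogonal projection onto the closure of the range of `A`. -/
noncomputable def projCR {E F : Type*} [NormedAddCommGroup E] [InnerProductSpace ℂ E]
    [NormedAddCommGroup F] [InnerProductSpace ℂ F] [CompleteSpace F]
    (A : E →L[ℂ] F) : F →L[ℂ] F :=
  (LinearMap.range (A : E →ₗ[ℂ] F)).topologicalClosure.subtypeL ∘L
    Submodule.orthogonalProjectionOnto (LinearMap.range (A : E →ₗ[ℂ] F)).topologicalClosure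

/-- `Td` is the (bounded) Moore-Penrose inverse of `T`: `T Td = P_T`, `Td T = P_{T*}`,
and `Td T Td = Td`. -/
def IsMPInv {E F : Type*} [NormedAddCommGroup E] [InnerProductSpace ℂ E] [CompleteSpace E]
    [NormedAddCommGroup F] [InnerProductSpace ℂ F] [CompleteSpace F]
    (T : E →L[ℂ] F) (Td : F →L[ℂ] E) : Prop :=
  T ∘L Td = projCR T ∧ Td ∘L T = projCR (adjoint T) ∧ Td ∘L (T ∘L Td) = Td

/-! The argument is algebra in the Penrose equations `A A† A = A`, `A† A A† = A†`,
`(A A†)* = A A†`, `(A† A)* = A† A`. Both orders are governed by the identity `A† B A† = A†`: since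
`A† = A† A†* A* = A* A†* A†` and `A = A A* A†* = A†* A* A`, it is equivalent to `A A* A = A B* A`,
and it makes `A† B` and `B A†` idempotent. As `range A† = range A*` and `range A†* = range A`,
the two range inclusions give `A† = B† B A† = A† B B†`. Conversely, `A† = Q̃ B† = B† Q` forces the
range inclusions and `A† B A† = Q̃ B† B B† Q = Q̃ A† = A†`. -/

def DiamondLE {E F : Type*} [NormedAddCommGroup E] [InnerProductSpace ℂ E] [CompleteSpace E]
    [NormedAddCommGroup F] [InnerProductSpace ℂ F] [CompleteSpace F] (A B : E →L[ℂ] F) : Prop :=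
  LinearMap.range (A : E →ₗ[ℂ] F) ≤ LinearMap.range (B : E →ₗ[ℂ] F) ∧
    LinearMap.range (adjoint A : F →ₗ[ℂ] E) ≤ LinearMap.range (adjoint B : F →ₗ[ℂ] E) ∧
    A ∘L ((adjoint A) ∘L A) = A ∘L ((adjoint B) ∘L A)

def MinusLE {R M N : Type*} [Semiring R] [TopologicalSpace M] [AddCommMonoid M] [Module R M]
    [TopologicalSpace N] [AddCommMonoid N] [Module R N] (A B : N →L[R] M) : Prop :=
  ∃ (Qt : M →L[R] M) (Q : N →L[R] N), Qt ∘L Qt = Qt ∧ Q ∘L Q = Q ∧ A = Qt ∘L B ∧ A = B ∘L Q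

lemma ContinuousLinearMap.comp_comp_eq_of_range_le {R M N P : Type*} [Semiring R]
    [TopologicalSpace M] [AddCommMonoid M] [Module R M] [TopologicalSpace N] [AddCommMonoid N]
    [Module R N] [TopologicalSpace P] [AddCommMonoid P] [Module R P]
    {T : M →L[R] N} {S : N →L[R] M} (hT : T ∘L (S ∘L T) = T) {X : P →L[R] N}
    (hX : LinearMap.range (X : P →ₗ[R] N) ≤ LinearMap.range (T : M →ₗ[R] N)) :
    T ∘L (S ∘L X) = X := by
  ext x
  obtain ⟨y, hy⟩ := hX (LinearMap.mem_range_self _ x)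
  change T y = X x at hy
  change T (S (X x)) = X x
  rw [← hy]
  exact DFunLike.congr_fun hT y

section MoorePenrose

variable {E F G : Type*} [NormedAddCommGroup E] [InnerProductSpace ℂ E]
  [NormedAddCommGroup F] [InnerProductSpace ℂ F] [NormedAddCommGroup G] [InnerProductSpace ℂ G]

lemma projCR_comp_self [CompleteSpace F] (T : G →L[ℂ] F) : projCR T ∘L T = T :=
  ext fun x => Submodule.starProjection_eq_self_iff.mpr
    (Submodule.le_topologicalClosure _ (LinearMap.mem_range_self _ x))

lemma adjoint_projCR [CompleteSpace F] (T : E →L[ℂ] F) : adjoint (projCR T) = projCR T :=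
  (isSelfAdjoint_starProjection (LinearMap.range (T : E →ₗ[ℂ] F)).topologicalClosure).adjoint_eq

lemma ContinuousLinearMap.range_comp_le_range (T : F →L[ℂ] E) (S : G →L[ℂ] F) :
    LinearMap.range ((T ∘L S : G →L[ℂ] E) : G →ₗ[ℂ] E) ≤ LinearMap.range (T : F →ₗ[ℂ] E) :=
  LinearMap.range_comp_le_range _ _

namespace IsMPInv

variable [CompleteSpace E] [CompleteSpace F] {T : E →L[ℂ] F} {Td : F →L[ℂ] E}

lemma comp_comp_self (h : IsMPInv T Td) : T ∘L (Td ∘L T) = T := by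
  rw [← comp_assoc, h.1, projCR_comp_self]

lemma inv_comp_comp_adjoint (h : IsMPInv T Td) : Td ∘L (T ∘L adjoint T) = adjoint T := by
  rw [← comp_assoc, h.2.1, projCR_comp_self]

lemma adjoint_comp_eq (h : IsMPInv T Td) : adjoint (T ∘L Td) = T ∘L Td := by
  rw [h.1, adjoint_projCR]

lemma adjoint_inv_comp_eq (h : IsMPInv T Td) : adjoint (Td ∘L T) = Td ∘L T := by
  rw [h.2.1, adjoint_projCR]

protected lemma adjoint (h : IsMPInv T Td) : IsMPInv (adjoint T) (adjoint Td) := by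
  refine ⟨?_, ?_, ?_⟩
  · rw [← adjoint_comp, h.adjoint_inv_comp_eq, h.2.1]
  · rw [← adjoint_comp, h.adjoint_comp_eq, h.1, adjoint_adjoint]
  · rw [← adjoint_comp, ← adjoint_comp, comp_assoc, h.2.2]

lemma eq_comp_adjoint (h : IsMPInv T Td) : T = T ∘L (adjoint T ∘L adjoint Td) := by
  rw [← adjoint_comp, h.adjoint_inv_comp_eq, h.comp_comp_self]

lemma eq_adjoint_comp (h : IsMPInv T Td) : T = adjoint Td ∘L (adjoint T ∘L T) := by
  rw [← comp_assoc, ← adjoint_comp, h.adjoint_comp_eq, comp_assoc, h.comp_comp_self]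

lemma inv_eq_comp_adjoint (h : IsMPInv T Td) : Td = Td ∘L (adjoint Td ∘L adjoint T) := by
  rw [← adjoint_comp, h.adjoint_comp_eq, h.2.2]

lemma inv_eq_adjoint_comp (h : IsMPInv T Td) : Td = adjoint T ∘L (adjoint Td ∘L Td) := by
  rw [← comp_assoc, ← adjoint_comp, h.adjoint_inv_comp_eq, comp_assoc, h.2.2]

lemma range_eq_range_adjoint (h : IsMPInv T Td) :
    LinearMap.range (Td : F →ₗ[ℂ] E) = LinearMap.range (adjoint T : F →ₗ[ℂ] E) := by
  apply le_antisymm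
  · conv_lhs => rw [h.inv_eq_adjoint_comp]
    exact range_comp_le_range _ _
  · conv_lhs => rw [← h.inv_comp_comp_adjoint]
    exact range_comp_le_range _ _

lemma range_adjoint_eq_range (h : IsMPInv T Td) :
    LinearMap.range (adjoint Td : E →ₗ[ℂ] F) = LinearMap.range (T : E →ₗ[ℂ] F) := by
  simpa only [adjoint_adjoint] using h.adjoint.range_eq_range_adjoint

lemma comp_adjoint_comp_eq_iff (h : IsMPInv T Td) (S : E →L[ℂ] F) :
    T ∘L (adjoint T ∘L T) = T ∘L (adjoint S ∘L T) ↔ Td ∘L (S ∘L Td) = Td := by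
  constructor
  · intro hS
    have hS' : adjoint T ∘L (S ∘L adjoint T) = adjoint T ∘L (T ∘L adjoint T) := by
      have := congrArg adjoint hS
      simp only [adjoint_comp, adjoint_adjoint] at this
      exact this.symm
    calc Td ∘L (S ∘L Td)
        = (Td ∘L (adjoint Td ∘L adjoint T)) ∘L (S ∘L (adjoint T ∘L (adjoint Td ∘L Td))) := by
          rw [← h.inv_eq_comp_adjoint, ← h.inv_eq_adjoint_comp]
      _ = (Td ∘L adjoint Td) ∘L (adjoint T ∘L (S ∘L adjoint T)) ∘L (adjoint Td ∘L Td) := rfl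
      _ = (Td ∘L adjoint Td) ∘L (adjoint T ∘L (T ∘L adjoint T)) ∘L (adjoint Td ∘L Td) := by
          rw [hS']
      _ = (Td ∘L (adjoint Td ∘L adjoint T)) ∘L (T ∘L (adjoint T ∘L (adjoint Td ∘L Td))) := rfl
      _ = Td ∘L (T ∘L Td) := by rw [← h.inv_eq_comp_adjoint, ← h.inv_eq_adjoint_comp]
      _ = Td := h.2.2
  · intro hS
    have hS' : adjoint Td ∘L (adjoint S ∘L adjoint Td) = adjoint Td := by
      rw [← adjoint_comp, ← adjoint_comp, comp_assoc, hS]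
    calc T ∘L (adjoint T ∘L T)
        = (T ∘L (adjoint T ∘L adjoint Td)) ∘L (adjoint T ∘L T) := by rw [← h.eq_comp_adjoint]
      _ = (T ∘L adjoint T) ∘L (adjoint Td ∘L (adjoint T ∘L T)) := rfl
      _ = (T ∘L adjoint T) ∘L (adjoint Td ∘L (adjoint S ∘L adjoint Td)) ∘L (adjoint T ∘L T) := by
          rw [hS']
      _ = (T ∘L (adjoint T ∘L adjoint Td)) ∘L (adjoint S ∘L (adjoint Td ∘L (adjoint T ∘L T))) := rfl
      _ = T ∘L (adjoint S ∘L T) := by rw [← h.eq_comp_adjoint, ← h.eq_adjoint_comp]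

end IsMPInv

end MoorePenrose

section Orders

variable {E F : Type*} [NormedAddCommGroup E] [InnerProductSpace ℂ E] [CompleteSpace E]
  [NormedAddCommGroup F] [InnerProductSpace ℂ F] [CompleteSpace F]
  {A B : E →L[ℂ] F} {Ad Bd : F →L[ℂ] E}

lemma IsMPInv.inv_comp_comp_eq_of_range_adjoint_le (hAd : IsMPInv A Ad) (hBd : IsMPInv B Bd)
    (h : LinearMap.range (adjoint A : F →ₗ[ℂ] E) ≤ LinearMap.range (adjoint B : F →ₗ[ℂ] E)) :
    Bd ∘L (B ∘L Ad) = Ad := by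
  refine comp_comp_eq_of_range_le hBd.2.2 ?_
  rwa [hAd.range_eq_range_adjoint, hBd.range_eq_range_adjoint]

lemma IsMPInv.comp_comp_inv_eq_of_range_le (hAd : IsMPInv A Ad) (hBd : IsMPInv B Bd)
    (h : LinearMap.range (A : E →ₗ[ℂ] F) ≤ LinearMap.range (B : E →ₗ[ℂ] F)) :
    Ad ∘L (B ∘L Bd) = Ad := by
  have h' := hAd.adjoint.inv_comp_comp_eq_of_range_adjoint_le hBd.adjoint
    (by simpa only [adjoint_adjoint] using h)
  have h'' := congrArg adjoint h'
  simp only [adjoint_comp, adjoint_adjoint] at h''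
  exact h''

lemma IsMPInv.range_adjoint_le_of_eq_comp (hAd : IsMPInv A Ad) (hBd : IsMPInv B Bd)
    {Q : F →L[ℂ] F} (h : Ad = Bd ∘L Q) :
    LinearMap.range (adjoint A : F →ₗ[ℂ] E) ≤ LinearMap.range (adjoint B : F →ₗ[ℂ] E) := by
  rw [← hAd.range_eq_range_adjoint, ← hBd.range_eq_range_adjoint, h]
  exact range_comp_le_range _ _

lemma IsMPInv.range_le_of_eq_comp (hAd : IsMPInv A Ad) (hBd : IsMPInv B Bd)
    {Qt : E →L[ℂ] E} (h : Ad = Qt ∘L Bd) :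
    LinearMap.range (A : E →ₗ[ℂ] F) ≤ LinearMap.range (B : E →ₗ[ℂ] F) := by
  simpa only [adjoint_adjoint] using
    hAd.adjoint.range_adjoint_le_of_eq_comp hBd.adjoint (by rw [h, adjoint_comp])

theorem diamondLE_iff_minusLE (hAd : IsMPInv A Ad) (hBd : IsMPInv B Bd) :
    DiamondLE A B ↔ MinusLE Ad Bd := by
  rw [DiamondLE, hAd.comp_adjoint_comp_eq_iff]
  constructor
  · rintro ⟨hran, hranAdj, hAdBAd⟩
    refine ⟨Ad ∘L B, B ∘L Ad, ?_, ?_, (hAd.comp_comp_inv_eq_of_range_le hBd hran).symm,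
      (hAd.inv_comp_comp_eq_of_range_adjoint_le hBd hranAdj).symm⟩
    · change (Ad ∘L (B ∘L Ad)) ∘L B = Ad ∘L B
      rw [hAdBAd]
    · change B ∘L (Ad ∘L (B ∘L Ad)) = B ∘L Ad
      rw [hAdBAd]
  · rintro ⟨Qt, Q, hQt, -, hl, hr⟩
    refine ⟨hAd.range_le_of_eq_comp hBd hl, hAd.range_adjoint_le_of_eq_comp hBd hr, ?_⟩
    calc Ad ∘L (B ∘L Ad) = (Qt ∘L Bd) ∘L (B ∘L (Bd ∘L Q)) := by rw [← hl, ← hr]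
      _ = Qt ∘L ((Bd ∘L (B ∘L Bd)) ∘L Q) := rfl
      _ = (Qt ∘L Qt) ∘L Bd := by rw [hBd.2.2, ← hr, hl]; rfl
      _ = Ad := by rw [hQt, hl]

end Orders

variable {H K : Type*} [NormedAddCommGroup H] [InnerProductSpace ℂ H] [CompleteSpace H]
  [NormedAddCommGroup K] [InnerProductSpace ℂ K] [CompleteSpace K]

theorem stmt10_general (A B : H →L[ℂ] K) (Ad Bd : K →L[ℂ] H)
    (hAd : IsMPInv A Ad) (hBd : IsMPInv B Bd) :
    (LinearMap.range (A : H →ₗ[ℂ] K) ≤ LinearMap.range (B : H →ₗ[ℂ] K) ∧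
     LinearMap.range (adjoint A : K →ₗ[ℂ] H) ≤ LinearMap.range (adjoint B : K →ₗ[ℂ] H) ∧
     A ∘L ((adjoint A) ∘L A) = A ∘L ((adjoint B) ∘L A)) ↔
    (∃ (Qt : H →L[ℂ] H) (Q : K →L[ℂ] K),
      Qt ∘L Qt = Qt ∧ Q ∘L Q = Q ∧ Ad = Qt ∘L Bd ∧ Ad = Bd ∘L Q) :=
  diamondLE_iff_minusLE hAd hBd

theorem stmt10 (A B : H →L[ℂ] K) (Ad Bd : K →L[ℂ] H)
    (hA : IsClosed (LinearMap.range (A : H →ₗ[ℂ] K) : Set K)) (hB : IsClosed (LinearMap.range (B : H →ₗ[ℂ] K) : Set K))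
    (hAd : IsMPInv A Ad) (hBd : IsMPInv B Bd) :
    (LinearMap.range (A : H →ₗ[ℂ] K) ≤ LinearMap.range (B : H →ₗ[ℂ] K) ∧
     LinearMap.range (adjoint A : K →ₗ[ℂ] H) ≤ LinearMap.range (adjoint B : K →ₗ[ℂ] H) ∧
     A ∘L ((adjoint A) ∘L A) = A ∘L ((adjoint B) ∘L A)) ↔
    (∃ (Qt : H →L[ℂ] H) (Q : K →L[ℂ] K),
      Qt ∘L Qt = Qt ∧ Q ∘L Q = Q ∧ Ad = Qt ∘L Bd ∧ Ad = Bd ∘L Q) :=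
  stmt10_general A B Ad Bd hAd hBd
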